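/- arXiv:math/0404125 — 7 statements merged into one kernel-verified Lean document; each statement's English description precedes it below -/
import Mathlib

section
/- Every point of the polytope Ω_n is uniquely determined by its coordinates of the form X_{ij11} with i ≤ j: if two points of Ω_n agree on all coordinates X_{ij11}, then they are equal. -/
/-- The point X(ρ): X(ρ)_{ijpq} = 1 if p = ρ(i) and q = ρ(j), else 0.
Indices are 0-based: index 0 corresponds to "1" and index 1 to "2" in the paper. -/
def Xpt (n : ℕ) (ρ : Fin n → Fin 2) : Fin n → Fin n → Fin 2 → Fin 2 → ℚ :=
  fun i j p q => if p = ρ i ∧ q = ρ j then 1 else 0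

/-- The polytope Ω_n: convex hull of the points X(ρ). -/
def Omega (n : ℕ) : Set (Fin n → Fin n → Fin 2 → Fin 2 → ℚ) :=
  convexHull ℚ (Set.range (Xpt n))

lemma fin2_cases (a : Fin 2) : a = 0 ∨ a = 1 := by fin_cases a <;> simp

def GoodSet (n : ℕ) : Set (Fin n → Fin n → Fin 2 → Fin 2 → ℚ) :=
  {x | (∀ i j p q, x i j p q = x j i q p) ∧
       (∀ i, x i i 0 0 + x i i 1 1 = 1) ∧
       (∀ i j p, x i j p 0 + x i j p 1 = x i i p p)}

lemma goodSet_convex (n : ℕ) : Convex ℚ (GoodSet n) := by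
  intro x hx y hy a b _ _ hab
  obtain ⟨xs, xd, xm⟩ := hx
  obtain ⟨ys, yd, ym⟩ := hy
  refine ⟨?_, ?_, ?_⟩
  · intro i j p q
    simp only [Pi.add_apply, Pi.smul_apply, smul_eq_mul]
    rw [xs i j p q, ys i j p q]
  · intro i
    have h1 := xd i
    have h2 := yd i
    simp only [Pi.add_apply, Pi.smul_apply, smul_eq_mul]
    nlinarith [h1, h2, hab]
  · intro i j p
    have h1 := xm i j p
    have h2 := ym i j p
    simp only [Pi.add_apply, Pi.smul_apply, smul_eq_mul]
    nlinarith [h1, h2]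

lemma xpt_mem (n : ℕ) (ρ : Fin n → Fin 2) : Xpt n ρ ∈ GoodSet n := by
  refine ⟨?_, ?_, ?_⟩
  · intro i j p q
    simp only [Xpt]
    congr 1
    exact propext and_comm
  · intro i
    rcases fin2_cases (ρ i) with h | h <;> simp [Xpt, h]
  · intro i j p
    rcases fin2_cases (ρ j) with h | h <;>
      rcases fin2_cases p with hp | hp <;>
      rcases fin2_cases (ρ i) with hi | hi <;>
      simp [Xpt, h, hp, hi]

lemma omega_subset_good (n : ℕ) : Omega n ⊆ GoodSet n :=
  convexHull_min (Set.range_subset_iff.2 (xpt_mem n)) (goodSet_convex n)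

theorem stmt8 (n : ℕ) (hn : 2 ≤ n)
    (x y : Fin n → Fin n → Fin 2 → Fin 2 → ℚ)
    (hx : x ∈ Omega n) (hy : y ∈ Omega n)
    (h : ∀ i j : Fin n, i ≤ j → x i j 0 0 = y i j 0 0) :
    x = y := by
  obtain ⟨xs, xd, xm⟩ := omega_subset_good n hx
  obtain ⟨ys, yd, ym⟩ := omega_subset_good n hy
  have h00 : ∀ i j, x i j 0 0 = y i j 0 0 := by
    intro i j
    rcases le_total i j with hij | hij
    · exact h i j hij
    · rw [xs i j 0 0, ys i j 0 0]; exact h j i hij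
  funext i j p q
  rcases fin2_cases p with hp | hp <;> rcases fin2_cases q with hq | hq <;>
    subst hp <;> subst hq
  · exact h00 i j
  · have h1 := xm i j 0
    have h2 := ym i j 0
    have h3 := h00 i j
    have h4 := h00 i i
    linarith
  · rw [xs i j 1 0, ys i j 1 0]
    have h1 := xm j i 0
    have h2 := ym j i 0
    have h3 := h00 j i
    have h4 := h00 j j
    linarith
  · have h1 := xm i j 1
    have h2 := ym i j 1
    have h3 := xd i
    have h4 := yd i
    have h5 := xs i j 1 0
    have h6 := ys i j 1 0
    have h7 := xm j i 0
    have h8 := ym j i 0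
    have h9 := h00 j i
    have h10 := h00 j j
    have h11 := h00 i i
    linarith
end

section
/- The affine dimension of the polytope Ω_n is at most n(n+1)/2. -/
/-- indicator of ρ i = 1 -/
def yv (n : ℕ) (ρ : Fin n → Fin 2) (i : Fin n) : ℚ := if ρ i = 1 then 1 else 0

/-- feature vector indexed by Sym2 -/
def wv (n : ℕ) (ρ : Fin n → Fin 2) : Sym2 (Fin n) → ℚ :=
  Sym2.lift ⟨fun i j => yv n ρ i * yv n ρ j, fun i j => mul_comm _ _⟩

def Tfun (n : ℕ) (w : Sym2 (Fin n) → ℚ) : Fin n → Fin n → Fin 2 → Fin 2 → ℚ :=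
  fun i j p q =>
    if p = 1 ∧ q = 1 then w s(i,j)
    else if p = 1 then w s(i,i) - w s(i,j)
    else if q = 1 then w s(j,j) - w s(i,j)
    else - w s(i,i) - w s(j,j) + w s(i,j)

def Tlin (n : ℕ) : (Sym2 (Fin n) → ℚ) →ₗ[ℚ] (Fin n → Fin n → Fin 2 → Fin 2 → ℚ) where
  toFun := Tfun n
  map_add' w₁ w₂ := by
    funext i j p q
    simp only [Tfun, Pi.add_apply]
    split_ifs <;> ring
  map_smul' c w := by
    funext i j p q
    simp only [Tfun, Pi.smul_apply, smul_eq_mul, RingHom.id_apply]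
    split_ifs <;> ring

def Cvec (n : ℕ) : Fin n → Fin n → Fin 2 → Fin 2 → ℚ :=
  fun _ _ p q => if p = 0 ∧ q = 0 then 1 else 0

lemma Xpt_rep (n : ℕ) (ρ : Fin n → Fin 2) :
    Xpt n ρ = Cvec n + Tfun n (wv n ρ) := by
  funext i j p q
  have h2 : ∀ a : Fin 2, a = 0 ∨ a = 1 := by decide
  rcases h2 (ρ i) with hi | hi <;> rcases h2 (ρ j) with hj | hj <;>
    fin_cases p <;> fin_cases q <;>
    simp [Xpt, Cvec, Tfun, wv, yv, hi, hj] <;> norm_num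

theorem stmt9 (n : ℕ) (hn : 2 ≤ n) :
    Module.finrank ℚ (affineSpan ℚ (Omega n)).direction ≤ n * (n + 1) / 2 := by
  rw [Omega, affineSpan_convexHull, direction_affineSpan, vectorSpan_def]
  have hle : Submodule.span ℚ (Set.range (Xpt n) -ᵥ Set.range (Xpt n)) ≤
      LinearMap.range (Tlin n) := by
    rw [Submodule.span_le]
    rintro v ⟨x, ⟨ρ, rfl⟩, y, ⟨σ, rfl⟩, rfl⟩
    refine ⟨wv n ρ - wv n σ, ?_⟩
    rw [map_sub]
    show Tfun n (wv n ρ) - Tfun n (wv n σ) = _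
    rw [Xpt_rep n ρ, Xpt_rep n σ]
    show _ = _ -ᵥ _
    rw [vsub_eq_sub]
    abel
  calc Module.finrank ℚ (Submodule.span ℚ (Set.range (Xpt n) -ᵥ Set.range (Xpt n)))
      ≤ Module.finrank ℚ (LinearMap.range (Tlin n)) := Submodule.finrank_mono hle
    _ ≤ Module.finrank ℚ (Sym2 (Fin n) → ℚ) := (Tlin n).finrank_range_le
    _ = n * (n + 1) / 2 := by
        rw [Module.finrank_fintype_fun_eq_card, Sym2.card]
        simp [Nat.choose_two_right, Nat.mul_comm]
end

section
/- The polytope Ω_n contains n(n+1)/2 + 1 affinely independent points; hence the affine dimension of Ω_n is at least n(n+1)/2. -/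
/-- Characteristic function of a set `s`: value 0 on `s`, value 1 off `s`. -/
def rho (n : ℕ) (s : Finset (Fin n)) : Fin n → Fin 2 := fun i => if i ∈ s then 0 else 1

lemma rho_eq_zero (n : ℕ) (s : Finset (Fin n)) (i : Fin n) :
    ((0 : Fin 2) = rho n s i) ↔ i ∈ s := by
  unfold rho
  by_cases h : i ∈ s <;> simp [h]

lemma g_eval (n : ℕ) (s : Finset (Fin n)) (i j : Fin n) :
    Xpt n (rho n s) i j 0 0 = if i ∈ s ∧ j ∈ s then 1 else 0 := by
  unfold Xpt
  simp [rho_eq_zero]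

lemma indep (n : ℕ) :
    AffineIndependent ℚ (fun s : {s : Finset (Fin n) // s.card ≤ 2} =>
      Xpt n (rho n s.val)) := by
  classical
  rw [affineIndependent_iff]
  intro F w hw0 hwv
  have heval : ∀ i j : Fin n,
      ∑ e ∈ F, w e * (if i ∈ e.val ∧ j ∈ e.val then (1 : ℚ) else 0) = 0 := by
    intro i j
    have h0 := congrFun (congrFun (congrFun (congrFun hwv i) j) 0) 0
    simp only [Finset.sum_apply, Pi.smul_apply, Pi.zero_apply, smul_eq_mul, g_eval] at h0
    exact h0
  have hpair : ∀ e ∈ F, ∀ i j : Fin n, i ≠ j → (e : Finset (Fin n)) = {i, j} → w e = 0 := by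
    intro e heF i j hij hes
    have h := heval i j
    rw [Finset.sum_eq_single e ?_ ?_] at h
    · simpa [hes] using h
    · intro e' _ hne
      rw [if_neg, mul_zero]
      rintro ⟨hi', hj'⟩
      apply hne
      apply Subtype.ext
      have hsub : ({i, j} : Finset (Fin n)) ⊆ e'.val := by
        intro x hx
        rcases Finset.mem_insert.mp hx with h | h
        · exact h ▸ hi'
        · exact (Finset.mem_singleton.mp h) ▸ hj'
      have h3 := Finset.eq_of_subset_of_card_le hsub
        (le_trans e'.property (Finset.card_pair hij).ge)
      rw [← h3, hes]
    · intro h; exact absurd heF h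
  have hsing : ∀ e ∈ F, ∀ i : Fin n, (e : Finset (Fin n)) = {i} → w e = 0 := by
    intro e heF i hes
    have h := heval i i
    rw [Finset.sum_eq_single e ?_ ?_] at h
    · simpa [hes] using h
    · intro e' he'F hne
      by_cases hi' : i ∈ e'.val
      · have hne' : e'.val ≠ {i} := fun hh => hne (Subtype.ext (hh.trans hes.symm))
        have h2 : ∃ j, j ≠ i ∧ j ∈ e'.val := by
          by_contra hcon
          push_neg at hcon
          apply hne'
          apply Finset.eq_singleton_iff_unique_mem.mpr
          exact ⟨hi', fun b hb => by
            by_contra hbne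
            exact hcon b hbne hb⟩
        obtain ⟨j, hji, hj'⟩ := h2
        have hsub : ({i, j} : Finset (Fin n)) ⊆ e'.val := by
          intro x hx
          rcases Finset.mem_insert.mp hx with h | h
          · exact h ▸ hi'
          · exact (Finset.mem_singleton.mp h) ▸ hj'
        have hval := Finset.eq_of_subset_of_card_le hsub
          (le_trans e'.property (Finset.card_pair hji.symm).ge)
        rw [hpair e' he'F i j hji.symm hval.symm, zero_mul]
      · rw [if_neg (fun hc => hi' hc.1), mul_zero]
    · intro h; exact absurd heF h
  intro e heF
  have hcard2 := e.property
  have hcases : e.val.card = 0 ∨ e.val.card = 1 ∨ e.val.card = 2 := by omega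
  rcases hcases with h0 | h1 | h2
  · have hes : e.val = ∅ := Finset.card_eq_zero.mp h0
    have hothers : ∀ e' ∈ F, e' ≠ e → w e' = 0 := by
      intro e' he'F hne
      have hne0 : e'.val.card ≠ 0 := by
        intro hc
        exact hne (Subtype.ext ((Finset.card_eq_zero.mp hc).trans hes.symm))
      have := e'.property
      have : e'.val.card = 1 ∨ e'.val.card = 2 := by omega
      rcases this with h | h
      · obtain ⟨i, hi⟩ := Finset.card_eq_one.mp h
        exact hsing e' he'F i hi
      · obtain ⟨i, j, hij, hs⟩ := Finset.card_eq_two.mp h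
        exact hpair e' he'F i j hij hs
    rw [Finset.sum_eq_single e hothers (fun h => absurd heF h)] at hw0
    exact hw0
  · obtain ⟨i, hi⟩ := Finset.card_eq_one.mp h1
    exact hsing e heF i hi
  · obtain ⟨i, j, hij, hs⟩ := Finset.card_eq_two.mp h2
    exact hpair e heF i j hij hs

lemma card_Tn (n : ℕ) :
    Fintype.card {s : Finset (Fin n) // s.card ≤ 2} = n * (n + 1) / 2 + 1 := by
  classical
  rw [Fintype.card_subtype]
  have hsplit : (Finset.univ.filter fun s : Finset (Fin n) => s.card ≤ 2) =
      (Finset.univ.filter fun s : Finset (Fin n) => s.card = 0) ∪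
      ((Finset.univ.filter fun s : Finset (Fin n) => s.card = 1) ∪
       (Finset.univ.filter fun s : Finset (Fin n) => s.card = 2)) := by
    ext s
    simp only [Finset.mem_filter, Finset.mem_univ, true_and, Finset.mem_union]
    omega
  have hk : ∀ k, (Finset.univ.filter fun s : Finset (Fin n) => s.card = k).card
      = n.choose k := by
    intro k
    rw [← Finset.powerset_univ, ← Finset.powersetCard_eq_filter,
      Finset.card_powersetCard, Finset.card_univ, Fintype.card_fin]
  rw [hsplit, Finset.card_union_of_disjoint, Finset.card_union_of_disjoint, hk, hk, hk]
  · have hp : (n + 1).choose 2 = n.choose 1 + n.choose 2 := Nat.choose_succ_succ n 1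
    have ht : (n + 1).choose 2 = (n + 1) * n / 2 := by
      rw [Nat.choose_two_right]
      simp
    rw [Nat.choose_zero_right, Nat.choose_one_right] at *
    have : (n + 1) * n = n * (n + 1) := Nat.mul_comm _ _
    omega
  · rw [Finset.disjoint_left]
    intro s hs hs'
    simp only [Finset.mem_filter, Finset.mem_univ, true_and] at hs hs'
    omega
  · rw [Finset.disjoint_left]
    intro s hs hs'
    simp only [Finset.mem_filter, Finset.mem_univ, true_and, Finset.mem_union] at hs hs'
    omega

theorem stmt10 (n : ℕ) (hn : 2 ≤ n) :
    (∃ f : Fin (n * (n + 1) / 2 + 1) → (Fin n → Fin n → Fin 2 → Fin 2 → ℚ),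
      (∀ k, f k ∈ Omega n) ∧ AffineIndependent ℚ f) ∧
    n * (n + 1) / 2 ≤ Module.finrank ℚ (affineSpan ℚ (Omega n)).direction := by
  classical
  obtain e := Fintype.equivFinOfCardEq (card_Tn n)
  set g : {s : Finset (Fin n) // s.card ≤ 2} → (Fin n → Fin n → Fin 2 → Fin 2 → ℚ) :=
    fun s => Xpt n (rho n s.val) with hg_def
  let f : Fin (n * (n + 1) / 2 + 1) → (Fin n → Fin n → Fin 2 → Fin 2 → ℚ) := g ∘ e.symm
  have hmem : ∀ k, f k ∈ Omega n := by
    intro k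
    exact subset_convexHull ℚ _ ⟨rho n (e.symm k).val, rfl⟩
  have hf : AffineIndependent ℚ f := (indep n).comp_embedding e.symm.toEmbedding
  refine ⟨⟨f, hmem, hf⟩, ?_⟩
  have h1 : Module.finrank ℚ (vectorSpan ℚ (Set.range f)) = n * (n + 1) / 2 :=
    hf.finrank_vectorSpan (by simp)
  have h2 : vectorSpan ℚ (Set.range f) ≤ (affineSpan ℚ (Omega n)).direction := by
    rw [direction_affineSpan]
    exact vectorSpan_mono ℚ (Set.range_subset_iff.mpr hmem)
  calc n * (n + 1) / 2 = Module.finrank ℚ (vectorSpan ℚ (Set.range f)) := h1.symm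
    _ ≤ _ := Submodule.finrank_mono h2
end

section
/- The affine dimension of the polytope Ω_n equals n(n+1)/2. -/
abbrev Idx (n : ℕ) := { p : Fin n × Fin n // p.1 ≤ p.2 }

/-- unsorted access to a `Idx`-indexed vector -/
def mfun (n : ℕ) (w : Idx n → ℚ) (i j : Fin n) : ℚ :=
  if h : i ≤ j then w ⟨(i, j), h⟩ else w ⟨(j, i), le_of_not_ge h⟩

lemma mfun_add (n : ℕ) (w v : Idx n → ℚ) (i j : Fin n) :
    mfun n (w + v) i j = mfun n w i j + mfun n v i j := by
  unfold mfun; split <;> rfl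

lemma mfun_smul (n : ℕ) (c : ℚ) (w : Idx n → ℚ) (i j : Fin n) :
    mfun n (c • w) i j = c * mfun n w i j := by
  unfold mfun; split <;> rfl

lemma mfun_of_le (n : ℕ) (w : Idx n → ℚ) (i j : Fin n) (h : i ≤ j) :
    mfun n w i j = w ⟨(i, j), h⟩ := by simp [mfun, h]

def Psifun (n : ℕ) (w : Idx n → ℚ) : Fin n → Fin n → Fin 2 → Fin 2 → ℚ :=
  fun i j p q =>
    if p = 1 then
      (if q = 1 then mfun n w i j else mfun n w i i - mfun n w i j)
    else
      (if q = 1 then mfun n w j j - mfun n w i j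
       else mfun n w i j - mfun n w i i - mfun n w j j)

def Psi (n : ℕ) : (Idx n → ℚ) →ₗ[ℚ] (Fin n → Fin n → Fin 2 → Fin 2 → ℚ) where
  toFun := Psifun n
  map_add' w v := by
    funext i j p q
    simp only [Psifun, Pi.add_apply, mfun_add]
    split <;> split <;> ring
  map_smul' c w := by
    funext i j p q
    simp only [Psifun, Pi.smul_apply, mfun_smul, RingHom.id_apply, smul_eq_mul]
    split <;> split <;> ring

def Phi (n : ℕ) : (Fin n → Fin n → Fin 2 → Fin 2 → ℚ) →ₗ[ℚ] (Idx n → ℚ) where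
  toFun Y := fun z => Y z.1.1 z.1.2 1 1
  map_add' _ _ := rfl
  map_smul' _ _ := rfl

lemma Phi_Psi (n : ℕ) (w : Idx n → ℚ) : Phi n (Psi n w) = w := by
  funext z
  obtain ⟨⟨i, j⟩, h⟩ := z
  simp [Phi, Psi, Psifun, mfun_of_le n w i j h]

/-- difference vector -/
def Dv (n : ℕ) (ρ : Fin n → Fin 2) : Fin n → Fin n → Fin 2 → Fin 2 → ℚ :=
  Xpt n ρ - Xpt n (fun _ => 0)

lemma Phi_Dv (n : ℕ) (ρ : Fin n → Fin 2) (z : Idx n) :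
    Phi n (Dv n ρ) z = (if ρ z.1.1 = 1 then (1:ℚ) else 0) * (if ρ z.1.2 = 1 then 1 else 0) := by
  obtain ⟨⟨i, j⟩, h⟩ := z
  have hi : ρ i = 0 ∨ ρ i = 1 := by omega
  have hj : ρ j = 0 ∨ ρ j = 1 := by omega
  rcases hi with hi | hi <;> rcases hj with hj | hj <;>
    simp [Phi, Dv, Xpt, hi, hj]

lemma mfun_Phi_Dv (n : ℕ) (ρ : Fin n → Fin 2) (i j : Fin n) :
    mfun n (Phi n (Dv n ρ)) i j
      = (if ρ i = 1 then (1:ℚ) else 0) * (if ρ j = 1 then 1 else 0) := by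
  unfold mfun
  split
  · rw [Phi_Dv]
  · rw [Phi_Dv]; ring

lemma Psi_Phi_Dv (n : ℕ) (ρ : Fin n → Fin 2) : Psi n (Phi n (Dv n ρ)) = Dv n ρ := by
  funext i j p q
  have hi : ρ i = 0 ∨ ρ i = 1 := by omega
  have hj : ρ j = 0 ∨ ρ j = 1 := by omega
  have hp : p = 0 ∨ p = 1 := by omega
  have hq : q = 0 ∨ q = 1 := by omega
  show Psifun n (Phi n (Dv n ρ)) i j p q = Dv n ρ i j p q
  simp only [Psifun, mfun_Phi_Dv]
  rcases hi with hi | hi <;> rcases hj with hj | hj <;> rcases hp with hp | hp <;>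
    rcases hq with hq | hq <;>
    simp [Dv, Xpt, hi, hj, hp, hq]

def Vsp (n : ℕ) : Submodule ℚ (Fin n → Fin n → Fin 2 → Fin 2 → ℚ) :=
  Submodule.span ℚ ((· -ᵥ Xpt n fun _ => 0) '' Set.range (Xpt n))

lemma Dv_mem (n : ℕ) (ρ : Fin n → Fin 2) : Dv n ρ ∈ Vsp n :=
  Submodule.subset_span ⟨Xpt n ρ, ⟨ρ, rfl⟩, rfl⟩

lemma fix_of_mem (n : ℕ) {v : Fin n → Fin n → Fin 2 → Fin 2 → ℚ} (hv : v ∈ Vsp n) :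
    Psi n (Phi n v) = v := by
  have h : Vsp n ≤ LinearMap.eqLocus ((Psi n).comp (Phi n)) LinearMap.id := by
    apply Submodule.span_le.mpr
    rintro _ ⟨_, ⟨ρ, rfl⟩, rfl⟩
    exact Psi_Phi_Dv n ρ
  exact h hv

/-- indicator of {i} -/
def ind1 (n : ℕ) (i : Fin n) : Fin n → Fin 2 := fun k => if k = i then 1 else 0

/-- indicator of {i, j} -/
def ind2 (n : ℕ) (i j : Fin n) : Fin n → Fin 2 := fun k => if k = i ∨ k = j then 1 else 0

lemma single_eq_diag (n : ℕ) (i : Fin n) (h : i ≤ i) :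
    Pi.single (⟨(i, i), h⟩ : Idx n) (1:ℚ) = Phi n (Dv n (ind1 n i)) := by
  funext z
  obtain ⟨⟨a, b⟩, hab⟩ := z
  rw [Phi_Dv]
  by_cases hai : a = i <;> by_cases hbi : b = i <;>
    simp [Pi.single_apply, Subtype.ext_iff, Prod.ext_iff, ind1, hai, hbi]

lemma single_eq_offdiag (n : ℕ) (i j : Fin n) (h : i ≤ j) (hij : i ≠ j) :
    Pi.single (⟨(i, j), h⟩ : Idx n) (1:ℚ)
      = Phi n (Dv n (ind2 n i j)) - Phi n (Dv n (ind1 n i)) - Phi n (Dv n (ind1 n j)) := by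
  funext z
  obtain ⟨⟨a, b⟩, hab⟩ := z
  replace hab : a ≤ b := hab
  simp only [Pi.sub_apply]
  rw [Phi_Dv, Phi_Dv, Phi_Dv]
  by_cases hai : a = i <;> by_cases haj : a = j <;> by_cases hbi : b = i <;>
      by_cases hbj : b = j <;>
    simp_all [Pi.single_apply, Subtype.ext_iff, Prod.ext_iff, ind1, ind2] <;>
    omega

lemma single_mem (n : ℕ) (z : Idx n) : Pi.single z (1:ℚ) ∈ (Vsp n).map (Phi n) := by
  obtain ⟨⟨i, j⟩, h⟩ := z
  by_cases hij : i = j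
  · subst hij
    rw [single_eq_diag n i h]
    exact Submodule.mem_map_of_mem (Dv_mem n _)
  · rw [single_eq_offdiag n i j h hij]
    exact sub_mem (sub_mem (Submodule.mem_map_of_mem (Dv_mem n _))
      (Submodule.mem_map_of_mem (Dv_mem n _))) (Submodule.mem_map_of_mem (Dv_mem n _))

lemma map_Phi_top (n : ℕ) : (Vsp n).map (Phi n) = ⊤ := by
  rw [eq_top_iff]
  intro w _
  have hw : w = ∑ z : Idx n, w z • (Pi.single z 1 : Idx n → ℚ) := by
    funext y
    simp [Pi.single_apply, Finset.sum_apply]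
  rw [hw]
  exact Submodule.sum_mem _ fun z _ => Submodule.smul_mem _ _ (single_mem n z)

lemma Vsp_eq_range (n : ℕ) : Vsp n = LinearMap.range (Psi n) := by
  apply le_antisymm
  · intro v hv
    exact ⟨Phi n v, fix_of_mem n hv⟩
  · rintro _ ⟨w, rfl⟩
    have hw : w ∈ (Vsp n).map (Phi n) := by rw [map_Phi_top]; trivial
    obtain ⟨v, hv, rfl⟩ := hw
    rw [fix_of_mem n hv]
    exact hv

lemma card_Idx (n : ℕ) : Fintype.card (Idx n) = n * (n + 1) / 2 := by
  rw [← Fintype.card_congr (Sym2.sortEquiv (α := Fin n)), Sym2.card, Fintype.card_fin,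
    Nat.choose_two_right]
  simp [Nat.mul_comm]

theorem stmt11 (n : ℕ) (hn : 2 ≤ n) :
    Module.finrank ℚ (affineSpan ℚ (Omega n)).direction = n * (n + 1) / 2 := by
  rw [Omega, affineSpan_convexHull, direction_affineSpan,
    vectorSpan_eq_span_vsub_set_right ℚ (Set.mem_range_self (fun _ => (0 : Fin 2)))]
  have : Submodule.span ℚ ((· -ᵥ Xpt n fun _ => 0) '' Set.range (Xpt n))
      = LinearMap.range (Psi n) := Vsp_eq_range n
  rw [this, LinearMap.finrank_range_of_inj, Module.finrank_fintype_fun_eq_card, card_Idx]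
  exact Function.LeftInverse.injective (Phi_Psi n)
end

section
/- The polytope Ω_n is 2-neighborly: for any two distinct functions ρ, σ : Fin n → Fin 2, the segment [X(ρ), X(σ)] is an edge (a 1-dimensional face) of Ω_n; equivalently, there is a linear functional F and a constant c such that F(X(ρ)) = F(X(σ)) = c and F(X(τ)) > c for every τ ∉ {ρ, σ}. -/
/-- The separating functional: coefficient at (i,j,p,q) is [p ≠ ρ i]·[q ≠ σ j]. -/
def Fsep (n : ℕ) (ρ σ : Fin n → Fin 2) : (Fin n → Fin n → Fin 2 → Fin 2 → ℚ) →ₗ[ℚ] ℚ where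
  toFun x := ∑ i, ∑ j, ∑ p, ∑ q,
    (if p = ρ i then 0 else 1) * (if q = σ j then 0 else 1) * x i j p q
  map_add' x y := by simp [mul_add, Finset.sum_add_distrib]
  map_smul' c x := by
    simp only [smul_eq_mul, RingHom.id_apply, Finset.mul_sum, Pi.smul_apply]
    refine Finset.sum_congr rfl fun i _ => Finset.sum_congr rfl fun j _ =>
      Finset.sum_congr rfl fun p _ => Finset.sum_congr rfl fun q _ => by ring

lemma innerSum4 (A B : Fin 2 → ℚ) (a b : Fin 2) :
    ∑ p, ∑ q, A p * B q * (if p = a ∧ q = b then (1:ℚ) else 0) = A a * B b := by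
  have h : ∀ p : Fin 2, ∑ q, (A p * B q * (if p = a ∧ q = b then (1:ℚ) else 0))
      = if p = a then A p * B b else 0 := by
    intro p
    by_cases h : p = a <;> simp [h]
  rw [Finset.sum_congr rfl fun p _ => h p]
  simp

lemma Fsep_val (n : ℕ) (ρ σ τ : Fin n → Fin 2) :
    Fsep n ρ σ (Xpt n τ) =
      (∑ i, if τ i = ρ i then (0:ℚ) else 1) * (∑ j, if τ j = σ j then (0:ℚ) else 1) := by
  rw [Finset.sum_mul_sum]
  simp only [Fsep, Xpt, LinearMap.coe_mk, AddHom.coe_mk]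
  refine Finset.sum_congr rfl fun i _ => Finset.sum_congr rfl fun j _ => ?_
  exact innerSum4 (fun p => if p = ρ i then 0 else 1) (fun q => if q = σ j then 0 else 1)
    (τ i) (τ j)

lemma sum_pos_of_ne {n : ℕ} {τ ρ : Fin n → Fin 2} (h : τ ≠ ρ) :
    0 < ∑ i, if τ i = ρ i then (0:ℚ) else 1 := by
  obtain ⟨i0, hi0⟩ := Function.ne_iff.mp h
  refine Finset.sum_pos' (fun i _ => by positivity) ⟨i0, Finset.mem_univ _, by simp [hi0]⟩

theorem stmt12 (n : ℕ) (hn : 2 ≤ n) (ρ σ : Fin n → Fin 2) (hρσ : ρ ≠ σ) :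
    ∃ (F : (Fin n → Fin n → Fin 2 → Fin 2 → ℚ) →ₗ[ℚ] ℚ) (c : ℚ),
      F (Xpt n ρ) = c ∧ F (Xpt n σ) = c ∧
      ∀ τ : Fin n → Fin 2, τ ≠ ρ → τ ≠ σ → c < F (Xpt n τ) := by
  refine ⟨Fsep n ρ σ, 0, by simp [Fsep_val], by simp [Fsep_val], fun τ h1 h2 => ?_⟩
  rw [Fsep_val]
  exact mul_pos (sum_pos_of_ne h1) (sum_pos_of_ne h2)
end

section
/- For any two distinct functions ρ, σ : Fin n → Fin 2, define F(X) = Σ_{i>j} α_{ijpq} X_{ijpq}, where for an edge (i,p)-(j,q) of the complete n-partite graph, α_{ijpq} = 2 if the edge belongs to neither of the cliques of ρ and σ, α_{ijpq} = 1 if the edge is one of two chosen marked edges (one in each clique, not in the other), and α_{ijpq} = 0 otherwise. Then F(X(ρ)) = F(X(σ)) = 1 and F(X(τ)) ≥ 2 for every function τ ∉ {ρ, σ}. -/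
/-- The coefficient α for the linear form F, given cliques ρ, σ and marked edges
(i₀,ρ i₀)-(j₀,ρ j₀) (marked edge of the clique of ρ) and (i₁,σ i₁)-(j₁,σ j₁)
(marked edge of the clique of σ): α = 1 on the marked edges, α = 2 on edges
belonging to neither clique, and α = 0 otherwise. -/
def alpha (n : ℕ) (ρ σ : Fin n → Fin 2) (i₀ j₀ i₁ j₁ : Fin n)
    (i j : Fin n) (p q : Fin 2) : ℚ :=
  if (i = i₀ ∧ j = j₀ ∧ p = ρ i₀ ∧ q = ρ j₀) ∨
     (i = i₁ ∧ j = j₁ ∧ p = σ i₁ ∧ q = σ j₁) then 1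
  else if ¬ (p = ρ i ∧ q = ρ j) ∧ ¬ (p = σ i ∧ q = σ j) then 2
  else 0

/-- The linear form F(X) = ∑_{i>j} α_{ijpq} X_{ijpq}. -/
def Fform (n : ℕ) (ρ σ : Fin n → Fin 2) (i₀ j₀ i₁ j₁ : Fin n)
    (x : Fin n → Fin n → Fin 2 → Fin 2 → ℚ) : ℚ :=
  ∑ i : Fin n, ∑ j ∈ Finset.univ.filter (· < i), ∑ p : Fin 2, ∑ q : Fin 2,
    alpha n ρ σ i₀ j₀ i₁ j₁ i j p q * x i j p q

lemma alpha_nonneg (n : ℕ) (ρ σ : Fin n → Fin 2) (i₀ j₀ i₁ j₁ : Fin n)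
    (i j : Fin n) (p q : Fin 2) : 0 ≤ alpha n ρ σ i₀ j₀ i₁ j₁ i j p q := by
  unfold alpha; split_ifs <;> norm_num

lemma sum_red (a b : Fin 2) (f : Fin 2 → Fin 2 → ℚ) :
    (∑ p : Fin 2, ∑ q : Fin 2, f p q * (if p = a ∧ q = b then (1:ℚ) else 0)) = f a b := by
  have h : ∀ p q : Fin 2, f p q * (if p = a ∧ q = b then (1:ℚ) else 0)
      = if p = a then (if q = b then f p q else 0) else 0 := by
    intro p q; split_ifs with h1 h2 <;> simp_all
  simp [h, Finset.sum_ite_eq']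

lemma Fform_Xpt (n : ℕ) (ρ σ : Fin n → Fin 2) (i₀ j₀ i₁ j₁ : Fin n)
    (τ : Fin n → Fin 2) :
    Fform n ρ σ i₀ j₀ i₁ j₁ (Xpt n τ) =
      ∑ i : Fin n, ∑ j ∈ Finset.univ.filter (· < i),
        alpha n ρ σ i₀ j₀ i₁ j₁ i j (τ i) (τ j) := by
  unfold Fform Xpt
  refine Finset.sum_congr rfl fun i _ => Finset.sum_congr rfl fun j _ => ?_
  exact sum_red (τ i) (τ j) _

theorem stmt13 (n : ℕ) (hn : 2 ≤ n) (ρ σ : Fin n → Fin 2) (hρσ : ρ ≠ σ)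
    (i₀ j₀ : Fin n) (h₀ : j₀ < i₀)
    -- the marked edge of the clique of ρ does not belong to the clique of σ
    (hm₀ : ¬ (σ i₀ = ρ i₀ ∧ σ j₀ = ρ j₀))
    (i₁ j₁ : Fin n) (h₁ : j₁ < i₁)
    -- the marked edge of the clique of σ does not belong to the clique of ρ
    (hm₁ : ¬ (ρ i₁ = σ i₁ ∧ ρ j₁ = σ j₁)) :
    Fform n ρ σ i₀ j₀ i₁ j₁ (Xpt n ρ) = 1 ∧
    Fform n ρ σ i₀ j₀ i₁ j₁ (Xpt n σ) = 1 ∧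
    ∀ τ : Fin n → Fin 2, τ ≠ ρ → τ ≠ σ →
      2 ≤ Fform n ρ σ i₀ j₀ i₁ j₁ (Xpt n τ) := by
  refine ⟨?_, ?_, ?_⟩
  · rw [Fform_Xpt]
    have hα : ∀ i j : Fin n, alpha n ρ σ i₀ j₀ i₁ j₁ i j (ρ i) (ρ j)
        = if i = i₀ ∧ j = j₀ then 1 else 0 := by
      intro i j
      unfold alpha
      by_cases hij : i = i₀ ∧ j = j₀
      · obtain ⟨hi, hj⟩ := hij; subst hi; subst hj; simp
      · rw [if_neg, if_neg hij, if_neg]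
        · exact fun h => h.1 ⟨rfl, rfl⟩
        · rintro (⟨hi, hj, -, -⟩ | ⟨hi, hj, hp, hq⟩)
          · exact hij ⟨hi, hj⟩
          · subst hi; subst hj; exact hm₁ ⟨hp, hq⟩
    simp only [hα]
    rw [Finset.sum_eq_single i₀]
    · rw [Finset.sum_eq_single j₀]
      · simp
      · intro b _ hb; simp [hb]
      · simp [h₀]
    · intro b _ hb
      apply Finset.sum_eq_zero
      intro j _; simp [hb]
    · simp
  · rw [Fform_Xpt]
    have hα : ∀ i j : Fin n, alpha n ρ σ i₀ j₀ i₁ j₁ i j (σ i) (σ j)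
        = if i = i₁ ∧ j = j₁ then 1 else 0 := by
      intro i j
      unfold alpha
      by_cases hij : i = i₁ ∧ j = j₁
      · obtain ⟨hi, hj⟩ := hij; subst hi; subst hj; simp
      · rw [if_neg, if_neg hij, if_neg]
        · exact fun h => h.2 ⟨rfl, rfl⟩
        · rintro (⟨hi, hj, hp, hq⟩ | ⟨hi, hj, -, -⟩)
          · subst hi; subst hj; exact hm₀ ⟨hp, hq⟩
          · exact hij ⟨hi, hj⟩
    simp only [hα]
    rw [Finset.sum_eq_single i₁]
    · rw [Finset.sum_eq_single j₁]
      · simp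
      · intro b _ hb; simp [hb]
      · simp [h₁]
    · intro b _ hb
      apply Finset.sum_eq_zero
      intro j _; simp [hb]
    · simp
  · intro τ hτρ hτσ
    rw [Fform_Xpt]
    -- find a pair (a, b) with b < a whose τ-edge lies in neither clique
    obtain ⟨a, b, hba, hbad⟩ :
        ∃ a b : Fin n, b < a ∧ ¬ (τ a = ρ a ∧ τ b = ρ b) ∧ ¬ (τ a = σ a ∧ τ b = σ b) := by
      obtain ⟨k, hk⟩ := Function.ne_iff.mp hτρ
      obtain ⟨l, hl⟩ := Function.ne_iff.mp hτσ
      by_cases hkl : k = l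
      · subst hkl
        -- pick m ≠ k
        have hnt : Nontrivial (Fin n) := Fin.nontrivial_iff_two_le.mpr hn
        obtain ⟨m, hm⟩ := exists_ne k
        rcases lt_or_gt_of_ne hm with h | h
        · exact ⟨k, m, h, fun h' => hk h'.1, fun h' => hl h'.1⟩
        · exact ⟨m, k, h, fun h' => hk h'.2, fun h' => hl h'.2⟩
      · rcases lt_or_gt_of_ne hkl with h | h
        · exact ⟨l, k, h, fun h' => hk h'.2, fun h' => hl h'.1⟩
        · exact ⟨k, l, h, fun h' => hk h'.1, fun h' => hl h'.2⟩
    have hval : alpha n ρ σ i₀ j₀ i₁ j₁ a b (τ a) (τ b) = 2 := by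
      unfold alpha
      rw [if_neg, if_pos ⟨hbad.1 ∘ fun h => ⟨h.1, h.2⟩, hbad.2 ∘ fun h => ⟨h.1, h.2⟩⟩]
      rintro (⟨hi, hj, hp, hq⟩ | ⟨hi, hj, hp, hq⟩)
      · subst hi; subst hj; exact hbad.1 ⟨hp, hq⟩
      · subst hi; subst hj; exact hbad.2 ⟨hp, hq⟩
    have hnn : ∀ i j : Fin n, (0:ℚ) ≤ alpha n ρ σ i₀ j₀ i₁ j₁ i j (τ i) (τ j) :=
      fun i j => alpha_nonneg n ρ σ i₀ j₀ i₁ j₁ i j (τ i) (τ j)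
    calc (2:ℚ) = alpha n ρ σ i₀ j₀ i₁ j₁ a b (τ a) (τ b) := hval.symm
      _ ≤ ∑ j ∈ Finset.univ.filter (· < a), alpha n ρ σ i₀ j₀ i₁ j₁ a j (τ a) (τ j) :=
          Finset.single_le_sum (fun j _ => hnn a j) (by simp [hba])
      _ ≤ ∑ i : Fin n, ∑ j ∈ Finset.univ.filter (· < i),
            alpha n ρ σ i₀ j₀ i₁ j₁ i j (τ i) (τ j) :=
          Finset.single_le_sum (fun i _ => Finset.sum_nonneg fun j _ => hnn i j)
            (Finset.mem_univ a)
end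

section
/- In Ω_3, let ρ₁ = (1,1,1) and ρ₂ = (1,2,2), and let F(X) = X_{1222} + X_{1312} + X_{1212} + X_{1221}. Then F(X(ρ)) = 1 for each of the six ρ ∉ {ρ₁, ρ₂}, F(X(ρ₁)) = 0, and F(X(ρ₂)) = 2. -/
theorem stmt17 :
    (∀ ρ : Fin 3 → Fin 2, ρ ≠ ![0, 0, 0] → ρ ≠ ![0, 1, 1] →
      Xpt 3 ρ 0 1 1 1 + Xpt 3 ρ 0 2 0 1 + Xpt 3 ρ 0 1 0 1 + Xpt 3 ρ 0 1 1 0 = 1) ∧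
    (Xpt 3 ![0, 0, 0] 0 1 1 1 + Xpt 3 ![0, 0, 0] 0 2 0 1 +
      Xpt 3 ![0, 0, 0] 0 1 0 1 + Xpt 3 ![0, 0, 0] 0 1 1 0 = 0) ∧
    (Xpt 3 ![0, 1, 1] 0 1 1 1 + Xpt 3 ![0, 1, 1] 0 2 0 1 +
      Xpt 3 ![0, 1, 1] 0 1 0 1 + Xpt 3 ![0, 1, 1] 0 1 1 0 = 2) := by
  refine ⟨?_, by norm_num [Xpt, Matrix.cons_val_two, Matrix.vecHead, Matrix.vecTail], by norm_num [Xpt, Matrix.cons_val_two, Matrix.vecHead, Matrix.vecTail]⟩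
  intro ρ hne1 hne2
  have h0 : ρ 0 = 0 ∨ ρ 0 = 1 := by omega
  have h1 : ρ 1 = 0 ∨ ρ 1 = 1 := by omega
  have h2 : ρ 2 = 0 ∨ ρ 2 = 1 := by omega
  rcases h0 with h0 | h0 <;> rcases h1 with h1 | h1 <;> rcases h2 with h2 | h2 <;>
    [ (exact absurd (funext fun i => by fin_cases i <;> simp [h0, h1, h2]) hne1);
      skip; skip; (exact absurd (funext fun i => by fin_cases i <;> simp [h0, h1, h2]) hne2);
      skip; skip; skip; skip ] <;>
    norm_num [Xpt, h0, h1, h2]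
end
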